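/- Let D be a positive squarefree integer and C a positive divisor of D. There exists a bijection e from the set of positive divisors of D·C onto the set of pairs (M, L) of positive divisors of D satisfying D ∣ M·L and M·L ∣ D·C, such that gcd(d, D·C/d) = gcd(M, L) whenever e(d) = (M, L), and such that e(1) = (1, D). -/

import Mathlib

/-!
The bijection is `d ↦ (gcd(d, D), gcd(DC/d, D))`, and everything is checked prime by prime.
At a prime with `v_p(D) = δ ≤ 1`, `v_p(C) = c ≤ δ` and `v_p(d) = a ≤ δ + c`, the pair has
exponents `min(a, δ)` and `min(δ + c - a, δ)`. As `a + (δ + c - a) ≤ 2δ`, at most one of `a` and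
`δ + c - a` exceeds `δ`, and then the other one is below `δ`: so `a` can be recovered, and
`min(a, δ + c - a)` equals the minimum of the two exponents of the pair. The inverse is
`(M, L) ↦ M · gcd(M, DC/(ML))`.
-/

namespace Nat

theorem dvd_iff_forall_factorization_le {a b : ℕ} (ha : a ≠ 0) (hb : b ≠ 0) :
    a ∣ b ↔ ∀ p, a.factorization p ≤ b.factorization p :=
  (factorization_le_iff_dvd ha hb).symm.trans Finsupp.le_def

theorem factorization_gcd_apply {a b : ℕ} (ha : a ≠ 0) (hb : b ≠ 0) (p : ℕ) :
    (a.gcd b).factorization p = min (a.factorization p) (b.factorization p) := by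
  rw [factorization_gcd ha hb, Finsupp.inf_apply]

theorem factorization_mul_apply {a b : ℕ} (ha : a ≠ 0) (hb : b ≠ 0) (p : ℕ) :
    (a * b).factorization p = a.factorization p + b.factorization p := by
  rw [factorization_mul ha hb, Finsupp.add_apply]

theorem factorization_div_apply {d n : ℕ} (h : d ∣ n) (p : ℕ) :
    (n / d).factorization p = n.factorization p - d.factorization p := by
  rw [factorization_div h, Finsupp.tsub_apply]

end Nat

open Nat

namespace DivisorPairing

def toPair (D C d : ℕ) : ℕ × ℕ := (d.gcd D, (D * C / d).gcd D)

def ofPair (D C : ℕ) (q : ℕ × ℕ) : ℕ := q.1 * q.1.gcd (D * C / (q.1 * q.2))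

def admissiblePairs (D C : ℕ) : Finset (ℕ × ℕ) :=
  (D.divisors ×ˢ D.divisors).filter (fun q => D ∣ q.1 * q.2 ∧ q.1 * q.2 ∣ D * C)

variable {D C : ℕ}

theorem mem_divisors_mul_iff (hD : D ≠ 0) (hC : C ≠ 0) {d : ℕ} :
    d ∈ (D * C).divisors ↔
      d ≠ 0 ∧ ∀ p, d.factorization p ≤ D.factorization p + C.factorization p := by
  have hDC := mul_ne_zero hD hC
  rw [mem_divisors, and_iff_left hDC]
  by_cases hd : d = 0
  · simp [hd, hDC]
  simp only [dvd_iff_forall_factorization_le hd hDC, factorization_mul_apply hD hC, ne_eq, hd,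
    not_false_eq_true, true_and]

theorem mem_admissiblePairs_iff (hD : D ≠ 0) (hC : C ≠ 0) {q : ℕ × ℕ} :
    q ∈ admissiblePairs D C ↔ q.1 ≠ 0 ∧ q.2 ≠ 0 ∧ ∀ p,
      q.1.factorization p ≤ D.factorization p ∧ q.2.factorization p ≤ D.factorization p ∧
      D.factorization p ≤ q.1.factorization p + q.2.factorization p ∧
      q.1.factorization p + q.2.factorization p ≤ D.factorization p + C.factorization p := by
  rcases q with ⟨M, L⟩
  simp only [admissiblePairs, Finset.mem_filter, Finset.mem_product, mem_divisors,
    and_iff_left hD]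
  by_cases hM : M = 0
  · simp [hM, hD]
  by_cases hL : L = 0
  · simp [hL, hD]
  have hML := mul_ne_zero hM hL
  simp only [dvd_iff_forall_factorization_le hM hD, dvd_iff_forall_factorization_le hL hD,
    dvd_iff_forall_factorization_le hD hML,
    dvd_iff_forall_factorization_le hML (mul_ne_zero hD hC), factorization_mul_apply hM hL,
    factorization_mul_apply hD hC, ← forall_and, and_assoc, ne_eq, hM, hL, not_false_eq_true,
    true_and]

theorem factorization_toPair_fst (hD : D ≠ 0) {d : ℕ} (hd : d ≠ 0) (p : ℕ) :
    (toPair D C d).1.factorization p = min (d.factorization p) (D.factorization p) :=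
  factorization_gcd_apply hd hD p

theorem factorization_toPair_snd (hD : D ≠ 0) (hC : C ≠ 0) {d : ℕ} (hd : d ∣ D * C) (p : ℕ) :
    (toPair D C d).2.factorization p =
      min (D.factorization p + C.factorization p - d.factorization p) (D.factorization p) := by
  have hDC := mul_ne_zero hD hC
  have hd0 : D * C / d ≠ 0 :=
    (div_ne_zero_iff_of_dvd hd).mpr ⟨hDC, ne_zero_of_dvd_ne_zero hDC hd⟩
  rw [toPair, factorization_gcd_apply hd0 hD, factorization_div_apply hd,
    factorization_mul_apply hD hC]

theorem factorization_ofPair (hD : D ≠ 0) (hC : C ≠ 0) {q : ℕ × ℕ} (hq : q ∈ admissiblePairs D C)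
    (p : ℕ) : (ofPair D C q).factorization p = q.1.factorization p + min (q.1.factorization p)
      (D.factorization p + C.factorization p - (q.1.factorization p + q.2.factorization p)) := by
  obtain ⟨hM, hL, -⟩ := (mem_admissiblePairs_iff hD hC).mp hq
  have hML : q.1 * q.2 ∣ D * C := (Finset.mem_filter.mp hq).2.2
  have hR : D * C / (q.1 * q.2) ≠ 0 :=
    (div_ne_zero_iff_of_dvd hML).mpr ⟨mul_ne_zero hD hC, mul_ne_zero hM hL⟩
  rw [ofPair, factorization_mul_apply hM (gcd_ne_zero_left hM), factorization_gcd_apply hM hR,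
    factorization_div_apply hML, factorization_mul_apply hD hC, factorization_mul_apply hM hL]

theorem factorization_le_of_squarefree (hsq : Squarefree D) (hCD : C ∣ D) (p : ℕ) :
    C.factorization p ≤ D.factorization p ∧ D.factorization p ≤ 1 :=
  ⟨(factorization_le_iff_dvd (ne_zero_of_dvd_ne_zero hsq.ne_zero hCD) hsq.ne_zero).mpr hCD p,
    hsq.natFactorization_le_one p⟩

theorem mapsTo_toPair (hsq : Squarefree D) (hCD : C ∣ D) :
    Set.MapsTo (toPair D C) (D * C).divisors (admissiblePairs D C) := by
  have hD := hsq.ne_zero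
  have hC := ne_zero_of_dvd_ne_zero hD hCD
  intro d hd
  obtain ⟨hd0, hdle⟩ := (mem_divisors_mul_iff hD hC).mp hd
  refine (mem_admissiblePairs_iff hD hC).mpr
    ⟨gcd_ne_zero_right hD, gcd_ne_zero_right hD, fun p => ?_⟩
  rw [factorization_toPair_fst hD hd0, factorization_toPair_snd hD hC (dvd_of_mem_divisors hd)]
  have := hdle p
  have := factorization_le_of_squarefree hsq hCD p
  omega

theorem mapsTo_ofPair (hsq : Squarefree D) (hCD : C ∣ D) :
    Set.MapsTo (ofPair D C) (admissiblePairs D C) (D * C).divisors := by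
  have hD := hsq.ne_zero
  have hC := ne_zero_of_dvd_ne_zero hD hCD
  intro q hq
  obtain ⟨hM, -, hq'⟩ := (mem_admissiblePairs_iff hD hC).mp hq
  refine (mem_divisors_mul_iff hD hC).mpr
    ⟨mul_ne_zero hM (gcd_ne_zero_left hM), fun p => ?_⟩
  rw [factorization_ofPair hD hC hq]
  have := hq' p
  omega

theorem leftInvOn_ofPair_toPair (hsq : Squarefree D) (hCD : C ∣ D) :
    Set.LeftInvOn (ofPair D C) (toPair D C) (D * C).divisors := by
  have hD := hsq.ne_zero
  have hC := ne_zero_of_dvd_ne_zero hD hCD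
  intro d hd
  obtain ⟨hd0, hdle⟩ := (mem_divisors_mul_iff hD hC).mp hd
  have hq := mapsTo_toPair hsq hCD hd
  obtain ⟨hM, -, -⟩ := (mem_admissiblePairs_iff hD hC).mp hq
  refine eq_of_factorization_eq (mul_ne_zero hM (gcd_ne_zero_left hM)) hd0 fun p => ?_
  rw [factorization_ofPair hD hC hq, factorization_toPair_fst hD hd0,
    factorization_toPair_snd hD hC (dvd_of_mem_divisors hd)]
  have := hdle p
  have := factorization_le_of_squarefree hsq hCD p
  omega

theorem rightInvOn_ofPair_toPair (hsq : Squarefree D) (hCD : C ∣ D) :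
    Set.RightInvOn (ofPair D C) (toPair D C) (admissiblePairs D C) := by
  have hD := hsq.ne_zero
  have hC := ne_zero_of_dvd_ne_zero hD hCD
  intro q hq
  obtain ⟨hM, hL, hq'⟩ := (mem_admissiblePairs_iff hD hC).mp hq
  have hd := mapsTo_ofPair hsq hCD hq
  obtain ⟨hd0, -⟩ := (mem_divisors_mul_iff hD hC).mp hd
  have hdf := factorization_ofPair hD hC hq
  refine Prod.ext (eq_of_factorization_eq (gcd_ne_zero_right hD) hM fun p => ?_)
    (eq_of_factorization_eq (gcd_ne_zero_right hD) hL fun p => ?_)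
  · rw [factorization_toPair_fst hD hd0, hdf]
    have := hq' p
    have := factorization_le_of_squarefree hsq hCD p
    omega
  · rw [factorization_toPair_snd hD hC (dvd_of_mem_divisors hd), hdf]
    have := hq' p
    have := factorization_le_of_squarefree hsq hCD p
    omega

theorem bijOn_toPair (hsq : Squarefree D) (hCD : C ∣ D) :
    Set.BijOn (toPair D C) (D * C).divisors (admissiblePairs D C) :=
  Set.InvOn.bijOn ⟨leftInvOn_ofPair_toPair hsq hCD, rightInvOn_ofPair_toPair hsq hCD⟩
    (mapsTo_toPair hsq hCD) (mapsTo_ofPair hsq hCD)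

theorem gcd_div_eq_gcd_toPair (hsq : Squarefree D) (hCD : C ∣ D) {d : ℕ}
    (hd : d ∈ (D * C).divisors) : d.gcd (D * C / d) = (toPair D C d).1.gcd (toPair D C d).2 := by
  have hD := hsq.ne_zero
  have hC := ne_zero_of_dvd_ne_zero hD hCD
  obtain ⟨hd0, hdle⟩ := (mem_divisors_mul_iff hD hC).mp hd
  have hdvd := dvd_of_mem_divisors hd
  have hq0 : D * C / d ≠ 0 := (div_ne_zero_iff_of_dvd hdvd).mpr ⟨mul_ne_zero hD hC, hd0⟩
  obtain ⟨hM, hL, -⟩ := (mem_admissiblePairs_iff hD hC).mp (mapsTo_toPair hsq hCD hd)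
  refine eq_of_factorization_eq (gcd_ne_zero_left hd0) (gcd_ne_zero_left hM) fun p => ?_
  rw [factorization_gcd_apply hd0 hq0, factorization_div_apply hdvd, factorization_mul_apply hD hC,
    factorization_gcd_apply hM hL,
    factorization_toPair_fst hD hd0, factorization_toPair_snd hD hC hdvd]
  have := hdle p
  have := factorization_le_of_squarefree hsq hCD p
  omega

theorem toPair_one : toPair D C 1 = (1, D) := by
  simp [toPair]

end DivisorPairing

theorem stmt_2_general (D C : ℕ) (hsq : Squarefree D) (hC : C ∣ D) :
    ∃ e : ℕ → ℕ × ℕ,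
      Set.BijOn e ((D * C).divisors : Set ℕ)
        (((D.divisors ×ˢ D.divisors).filter
            (fun q => D ∣ q.1 * q.2 ∧ q.1 * q.2 ∣ D * C) : Finset (ℕ × ℕ)) : Set (ℕ × ℕ)) ∧
      (∀ d ∈ (D * C).divisors, Nat.gcd d (D * C / d) = Nat.gcd (e d).1 (e d).2) ∧
      e 1 = (1, D) :=
  ⟨DivisorPairing.toPair D C, DivisorPairing.bijOn_toPair hsq hC,
    fun _ hd => DivisorPairing.gcd_div_eq_gcd_toPair hsq hC hd, DivisorPairing.toPair_one⟩

/-- For `D` a positive squarefree integer and `C` a positive divisor of `D`,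
there is a bijection `e` from the divisors of `D·C` onto the pairs `(M, L)` of divisors of
`D` with `D ∣ M·L` and `M·L ∣ D·C`, such that `gcd(d, D·C/d) = gcd(M, L)` whenever
`e(d) = (M, L)`, and `e(1) = (1, D)`. -/
theorem stmt_2 (D C : ℕ) (hD : 0 < D) (hsq : Squarefree D) (hC : C ∣ D) (hC0 : 0 < C) :
    ∃ e : ℕ → ℕ × ℕ,
      Set.BijOn e ((D * C).divisors : Set ℕ)
        (((D.divisors ×ˢ D.divisors).filter
            (fun q => D ∣ q.1 * q.2 ∧ q.1 * q.2 ∣ D * C) : Finset (ℕ × ℕ)) : Set (ℕ × ℕ)) ∧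
      (∀ d ∈ (D * C).divisors, Nat.gcd d (D * C / d) = Nat.gcd (e d).1 (e d).2) ∧
      e 1 = (1, D) :=
  stmt_2_general D C hsq hC
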